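/- arXiv:math/0505627 — 2 statements merged into one kernel-verified Lean document; each statement's English description precedes it below -/
import Mathlib

section
/- Let f(x) = d·x (mod 1) on the circle ℝ/ℤ with d ≥ 2, and let B ⊂ S^1 be finite with card(B) ≥ 2 and f injective on B. Then f is orientation preserving on B if and only if the sum of the remainders of the lengths of all holes of B equals 1/d. -/
open MeasureTheory Set Metric Filter Topology

noncomputable section

abbrev S1 := AddCircle (1 : ℝ)

def fd (d : ℕ) : S1 → S1 := fun x => d • x

def len (A : Set S1) : ℝ := (volume A).toReal

def IsHole (B H : Set S1) : Prop := ∃ x ∈ Bᶜ, H = connectedComponentIn Bᶜ x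

def openArc (u w : S1) : Set S1 := {x | SBtw.sbtw u x w}

def OrientPresOn (g : S1 → S1) (B : Set S1) : Prop :=
  Set.InjOn g B ∧ ∀ a ∈ B, ∀ b ∈ B, ∀ c ∈ B, SBtw.sbtw a b c → SBtw.sbtw (g a) (g b) (g c)

def emb (x : S1) : ℂ := (AddCircle.toCircle x : ℂ)

def chord (a b : S1) : Set ℂ := segment ℝ (emb a) (emb b)

def CH (A : Set S1) : Set ℂ := convexHull ℝ (emb '' A)

def Wandering (d N : ℕ) (T : Set S1) : Prop :=
  ∀ i j : ℕ, ((fd d)^[i] '' T).ncard = N ∧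
    (i ≠ j → Disjoint (CH ((fd d)^[i] '' T)) (CH ((fd d)^[j] '' T)))

def IsHoleEnum (B : Set S1) {N : ℕ} (H : Fin N → Set S1) : Prop :=
  Function.Injective H ∧ (∀ k, IsHole B (H k)) ∧ (∀ G, IsHole B G → ∃ k, H k = G) ∧
  ∀ k l : Fin N, k ≤ l → len (H k) ≤ len (H l)

def rem (d : ℕ) (s : ℝ) : ℝ := s - (⌊(d : ℝ) * s⌋ : ℝ) / d

def ImageHoleRel (g : S1 → S1) (H K : Set S1) : Prop :=
  ∃ u w : S1, u ≠ w ∧ H = openArc u w ∧ K = openArc (g u) (g w)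

def InLimitSet (d : ℕ) (T : Set S1) (a b : S1) : Prop :=
  ∃ φ : ℕ → ℕ, StrictMono φ ∧ ∃ u v : ℕ → S1,
    (∀ n, u n ∈ (fd d)^[φ n] '' T ∧ v n ∈ (fd d)^[φ n] '' T) ∧
    Tendsto (fun n => hausdorffDist (chord (u n) (v n)) (chord a b)) atTop (nhds 0)


/-!
List `B` increasingly as `θ 0 < ⋯ < θ m` in `[0, 1)`. The holes of `B` are the arcs from each
`θ k` to the cyclically next point, of lengths `s k`, and `rem d s = fract (d * s) / d`. Measure
the images from `f (θ 0)`: the positions `p k = fract (d * (θ k - θ 0)) ∈ [0, 1)` satisfy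
`fract (d * s k) = fract (p (k + 1) - p k)`. As the differences `p (k + 1) - p k` sum to zero
cyclically, `∑ fract (p (k + 1) - p k)` counts the cyclic descents of `p`; the step back to
`p 0 = 0` is always one, so the sum is `1` exactly when `p` is increasing, which is exactly when
`f` preserves the cyclic order of `B`.
-/

lemma sbtw_coe_iff_lt {a b c : ℝ} (hb : b ∈ Ioo a (a + 1)) (hc : c ∈ Ioo a (a + 1)) :
    SBtw.sbtw (a : S1) b c ↔ b < c := by
  rw [sbtw_iff_btw_not_btw, btw_cyclic (a := (c : S1)), QuotientAddGroup.btw_coe_iff,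
    QuotientAddGroup.btw_coe_iff, toIcoMod_eq_self _ |>.2 (Ioo_subset_Ico_self hb),
    toIcoMod_eq_self _ |>.2 (Ioo_subset_Ico_self hc),
    toIocMod_eq_self _ |>.2 (Ioo_subset_Ioc_self hb),
    toIocMod_eq_self _ |>.2 (Ioo_subset_Ioc_self hc), lt_iff_le_not_ge]

theorem sbtw_coe_apply_iff_of_strictMono {ι : Type*} [LinearOrder ι] {θ : ι → ℝ} (hθ : StrictMono θ)
    (hspan : ∀ i j, θ j < θ i + 1) {i j k : ι} :
    SBtw.sbtw (θ i : S1) (θ j) (θ k) ↔ i < j ∧ j < k ∨ j < k ∧ k < i ∨ k < i ∧ i < j := by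
  have sorted {a b c : ι} (hab : a < b) (hbc : b < c) : SBtw.sbtw (θ a : S1) (θ b) (θ c) :=
    (sbtw_coe_iff_lt ⟨hθ hab, hspan a b⟩ ⟨hθ (hab.trans hbc), hspan a c⟩).2 (hθ hbc)
  constructor
  · intro h
    have hij : i ≠ j := by rintro rfl; exact sbtw_irrefl_left h
    have hjk : j ≠ k := by rintro rfl; exact sbtw_irrefl_right h
    have hik : i ≠ k := by rintro rfl; exact sbtw_irrefl_left_right h
    rcases hij.lt_or_gt with hij | hij <;> rcases hjk.lt_or_gt with hjk | hjk <;>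
      rcases hik.lt_or_gt with hik | hik
    all_goals first
      | tauto
      | exact (sbtw_asymm h (sorted hjk hij)).elim
      | exact (sbtw_asymm h (sorted hik hjk).cyclic_left).elim
      | exact (sbtw_asymm h (sorted hij hik).cyclic_right).elim
  · rintro (⟨hij, hjk⟩ | ⟨hjk, hki⟩ | ⟨hki, hij⟩)
    · exact sorted hij hjk
    · exact (sorted hjk hki).cyclic_right
    · exact (sorted hki hij).cyclic_left

lemma volume_coe_image_Ioo {a c : ℝ} (hc : c ≤ a + 1) :
    volume (((↑) : ℝ → S1) '' Ioo a c) = ENNReal.ofReal (c - a) := by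
  have hsub : Ioo a c ⊆ Ioc a (a + 1) := fun x hx => ⟨hx.1, hx.2.le.trans hc⟩
  have hpre : (↑) ⁻¹' (((↑) : ℝ → S1) '' Ioo a c) ∩ Ioc a (a + 1) = Ioo a c := by
    refine subset_antisymm ?_ fun x hx => ⟨mem_image_of_mem _ hx, hsub hx⟩
    rintro x ⟨⟨y, hy, hyx⟩, hx⟩
    rwa [← (AddCircle.coe_eq_coe_iff_of_mem_Ioc (hsub hy) hx).1 hyx]
  rw [AddCircle.add_projection_respects_measure 1 a
    (QuotientAddGroup.isOpenMap_coe _ isOpen_Ioo).measurableSet, hpre, Real.volume_Ioo]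

lemma fd_coe (d : ℕ) (r : ℝ) : fd d r = ((d * r : ℝ) : S1) := by
  rw [fd, ← nsmul_eq_mul, AddCircle.coe_nsmul]

lemma rem_eq_fract_div {d : ℕ} (hd : d ≠ 0) (s : ℝ) : rem d s = Int.fract (d * s) / d := by
  rw [rem, Int.fract, sub_div, mul_div_cancel_left₀ _ (Nat.cast_ne_zero.2 hd)]

theorem sum_fract_sub_eq_one_iff {m : ℕ} (hm : 0 < m) {g : Fin (m + 1) → ℝ}
    (hg : Function.Injective g) (hg0 : g 0 = 0) (hmem : ∀ k, g k ∈ Ico 0 1) :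
    ∑ k, Int.fract (g (k + 1) - g k) = 1 ↔ StrictMono g := by
  have htel : ∑ k, (g (k + 1) - g k) = 0 := by
    rw [Finset.sum_sub_distrib, sub_eq_zero]
    exact Equiv.sum_comp (Equiv.addRight 1) g
  have hsum : ∑ k, Int.fract (g (k + 1) - g k) = -((∑ k, ⌊g (k + 1) - g k⌋ : ℤ) : ℝ) := by
    simp only [Int.fract, Finset.sum_sub_distrib, htel]
    push_cast; ring
  have hlast : ⌊g (Fin.last m + 1) - g (Fin.last m)⌋ = -1 := by
    have hl0 : Fin.last m ≠ 0 := by rw [Ne, Fin.ext_iff, Fin.val_last, Fin.val_zero]; omega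
    have hpos : 0 < g (Fin.last m) := (hmem _).1.lt_of_ne (hg0 ▸ hg.ne hl0.symm)
    rw [Fin.last_add_one, hg0, Int.floor_eq_iff]
    constructor <;> push_cast <;> linarith [(hmem (Fin.last m)).2]
  have hlt (k : Fin m) : g k.succ - g k.castSucc < 1 := by
    linarith [(hmem k.succ).2, (hmem k.castSucc).1]
  have hnonpos (k : Fin m) : ⌊g k.succ - g k.castSucc⌋ ≤ 0 := by
    have := Int.floor_lt.2 (show _ < ((1 : ℤ) : ℝ) by exact_mod_cast hlt k)
    omega
  have hstep (k : Fin m) : ⌊g k.succ - g k.castSucc⌋ = 0 ↔ g k.castSucc < g k.succ := by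
    rw [Int.floor_eq_zero_iff, ← (hg.ne Fin.castSucc_lt_succ.ne).le_iff_lt]
    exact ⟨fun h => sub_nonneg.1 h.1, fun h => ⟨sub_nonneg.2 h, hlt k⟩⟩
  rw [hsum, Fin.sum_univ_castSucc, hlast, Fin.strictMono_iff_lt_succ]
  simp only [Fin.coeSucc_eq_succ]
  rw [neg_eq_iff_eq_neg, show (-1 : ℝ) = ((-1 : ℤ) : ℝ) by norm_num, Int.cast_inj, add_eq_right,
    Finset.sum_eq_zero_iff_of_nonpos fun k _ => hnonpos k]
  simp only [Finset.mem_univ, true_implies, hstep]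

section HoleArcs

variable {m : ℕ} {θ : Fin (m + 1) → ℝ}

/-- The lift of the cyclic successor `θ (k + 1)` lying in `(θ k, θ k + 1]`. -/
def nextLift (θ : Fin (m + 1) → ℝ) : Fin (m + 1) → ℝ :=
  Fin.lastCases (θ 0 + 1) fun k => θ k.succ

def holeArc (θ : Fin (m + 1) → ℝ) (k : Fin (m + 1)) : Set S1 :=
  (↑) '' Ioo (θ k) (nextLift θ k)

lemma exists_int_nextLift_eq (k : Fin (m + 1)) : ∃ z : ℤ, nextLift θ k = θ (k + 1) + z := by
  induction k using Fin.lastCases with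
  | last => exact ⟨1, by simp [nextLift]⟩
  | cast k => exact ⟨0, by simp [nextLift, Fin.coeSucc_eq_succ]⟩

lemma lt_nextLift (hθ : StrictMono θ) (hspan : ∀ i j, θ j < θ i + 1) (k : Fin (m + 1)) :
    θ k < nextLift θ k := by
  induction k using Fin.lastCases with
  | last => simpa [nextLift] using hspan 0 (Fin.last m)
  | cast k => simpa [nextLift] using hθ Fin.castSucc_lt_succ

lemma nextLift_le (hspan : ∀ i j, θ j < θ i + 1) (k : Fin (m + 1)) : nextLift θ k ≤ θ 0 + 1 := by
  induction k using Fin.lastCases with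
  | last => simp [nextLift]
  | cast k => simpa [nextLift] using (hspan 0 k.succ).le

lemma nextLift_le_of_lt (hθ : Monotone θ) {k j : Fin (m + 1)} (hkj : k < j) :
    nextLift θ k ≤ θ j := by
  induction k using Fin.lastCases with
  | last => exact absurd hkj (Fin.le_last j).not_gt
  | cast k => simpa [nextLift] using hθ (Fin.castSucc_lt_iff_succ_le.1 hkj)

lemma apply_notMem_Ioo_nextLift (hθ : StrictMono θ) (j k : Fin (m + 1)) :
    θ j ∉ Ioo (θ k) (nextLift θ k) := fun h =>
  (h.2.trans_le (nextLift_le_of_lt hθ.monotone (hθ.lt_iff_lt.1 h.1))).false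

lemma mem_Ico_of_mem_Ioo_nextLift (hθ : Monotone θ) (hspan : ∀ i j, θ j < θ i + 1)
    {k : Fin (m + 1)} {t : ℝ} (ht : t ∈ Ioo (θ k) (nextLift θ k)) : t ∈ Ico (θ 0) (θ 0 + 1) :=
  ⟨(hθ (Fin.zero_le k)).trans ht.1.le, ht.2.trans_le (nextLift_le hspan k)⟩

lemma apply_mem_Ico (hθ : Monotone θ) (hspan : ∀ i j, θ j < θ i + 1) (k : Fin (m + 1)) :
    θ k ∈ Ico (θ 0) (θ 0 + 1) :=
  ⟨hθ (Fin.zero_le k), hspan 0 k⟩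

lemma exists_mem_Ioo_nextLift {t : ℝ} (ht : t ∈ Ico (θ 0) (θ 0 + 1))
    (hne : t ∉ range θ) : ∃ k, t ∈ Ioo (θ k) (nextLift θ k) := by
  have hne' : ∀ j, θ j ≠ t := fun j h => hne ⟨j, h⟩
  obtain ⟨k, hk, hmax⟩ := (Finset.univ.filter (θ · < t)).exists_max_image id
    ⟨0, by simpa using ht.1.lt_of_ne (hne' 0)⟩
  simp only [Finset.mem_filter, Finset.mem_univ, true_and, id] at hk hmax
  refine ⟨k, hk, ?_⟩
  induction k using Fin.lastCases with
  | last => simpa [nextLift] using ht.2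
  | cast k =>
    simp only [nextLift, Fin.lastCases_castSucc]
    refine ((not_lt.1 fun h => ?_).lt_of_ne (hne' _).symm)
    exact (hmax _ h).not_gt Fin.castSucc_lt_succ

lemma isOpen_holeArc (k : Fin (m + 1)) : IsOpen (holeArc θ k) :=
  QuotientAddGroup.isOpenMap_coe _ isOpen_Ioo

lemma isPreconnected_holeArc (k : Fin (m + 1)) : IsPreconnected (holeArc θ k) :=
  isPreconnected_Ioo.image _ continuous_quotient_mk'.continuousOn

lemma len_holeArc (hθ : StrictMono θ) (hspan : ∀ i j, θ j < θ i + 1) (k : Fin (m + 1)) :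
    len (holeArc θ k) = nextLift θ k - θ k := by
  have hle : nextLift θ k ≤ θ k + 1 :=
    (nextLift_le hspan k).trans (by linarith [hθ.monotone (Fin.zero_le k)])
  rw [len, holeArc, volume_coe_image_Ioo hle,
    ENNReal.toReal_ofReal (sub_nonneg.2 (lt_nextLift hθ hspan k).le)]

lemma holeArc_subset_compl (hθ : StrictMono θ) (hspan : ∀ i j, θ j < θ i + 1) (k : Fin (m + 1)) :
    holeArc θ k ⊆ (range fun j => (θ j : S1))ᶜ := by
  rintro _ ⟨t, ht, rfl⟩ ⟨j, hj⟩
  rw [AddCircle.coe_eq_coe_iff_of_mem_Ico (apply_mem_Ico hθ.monotone hspan j)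
    (mem_Ico_of_mem_Ioo_nextLift hθ.monotone hspan ht)] at hj
  exact apply_notMem_Ioo_nextLift hθ j k (hj ▸ ht)

lemma exists_mem_holeArc {x : S1} (hx : x ∉ range fun j => (θ j : S1)) :
    ∃ k, x ∈ holeArc θ k := by
  obtain ⟨t, ht, rfl⟩ : x ∈ ((↑) : ℝ → S1) '' Ico (θ 0) (θ 0 + 1) := by
    rw [AddCircle.coe_image_Ico_eq]; trivial
  obtain ⟨k, hk⟩ := exists_mem_Ioo_nextLift ht fun ⟨j, hj⟩ => hx ⟨j, congrArg _ hj⟩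
  exact ⟨k, t, hk, rfl⟩

lemma disjoint_holeArc (hθ : StrictMono θ) (hspan : ∀ i j, θ j < θ i + 1) {k l : Fin (m + 1)}
    (hkl : k ≠ l) : Disjoint (holeArc θ k) (holeArc θ l) := by
  wlog h : k < l generalizing k l
  · exact (this hkl.symm (hkl.lt_or_gt.resolve_left h)).symm
  rw [Set.disjoint_left]
  rintro _ ⟨t, ht, rfl⟩ ⟨t', ht', htt'⟩
  rw [AddCircle.coe_eq_coe_iff_of_mem_Ico (mem_Ico_of_mem_Ioo_nextLift hθ.monotone hspan ht')
    (mem_Ico_of_mem_Ioo_nextLift hθ.monotone hspan ht)] at htt'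
  subst htt'
  exact (ht.2.trans_le (nextLift_le_of_lt hθ.monotone h)).not_gt ht'.1

lemma connectedComponentIn_eq_holeArc (hθ : StrictMono θ) (hspan : ∀ i j, θ j < θ i + 1)
    {x : S1} {k : Fin (m + 1)} (hx : x ∈ holeArc θ k) :
    connectedComponentIn (range fun j => (θ j : S1))ᶜ x = holeArc θ k := by
  set B := range fun j => (θ j : S1)
  have hxB : x ∈ Bᶜ := holeArc_subset_compl hθ hspan k hx
  refine subset_antisymm ?_ ((isPreconnected_holeArc k).subset_connectedComponentIn hx
    (holeArc_subset_compl hθ hspan k))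
  refine isPreconnected_connectedComponentIn.subset_left_of_subset_union (isOpen_holeArc k)
    (isOpen_biUnion fun l (_ : l ≠ k) => isOpen_holeArc l)
    (Set.disjoint_iUnion₂_right.2 fun l hl => disjoint_holeArc hθ hspan (Ne.symm hl))
    (fun y hy => ?_) ⟨x, mem_connectedComponentIn hxB, hx⟩
  obtain ⟨l, hl⟩ := exists_mem_holeArc (connectedComponentIn_subset _ _ hy)
  by_cases hlk : l = k
  · exact Or.inl (hlk ▸ hl)
  · exact Or.inr (mem_biUnion hlk hl)

lemma exists_eq_holeArc_of_isHole (hθ : StrictMono θ) (hspan : ∀ i j, θ j < θ i + 1)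
    {G : Set S1} (hG : IsHole (range fun j => (θ j : S1)) G) :
    ∃ k, G = holeArc θ k := by
  obtain ⟨x, hx, rfl⟩ := hG
  obtain ⟨k, hk⟩ := exists_mem_holeArc hx
  exact ⟨k, connectedComponentIn_eq_holeArc hθ hspan hk⟩

end HoleArcs

section ImagePositions

variable {m : ℕ} {θ : Fin (m + 1) → ℝ}

def imagePos (d : ℕ) (θ : Fin (m + 1) → ℝ) (k : Fin (m + 1)) : ℝ := Int.fract (d * (θ k - θ 0))

lemma imagePos_zero (d : ℕ) (θ : Fin (m + 1) → ℝ) : imagePos d θ 0 = 0 := by simp [imagePos]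

lemma imagePos_mem_Ico (d : ℕ) (θ : Fin (m + 1) → ℝ) (k : Fin (m + 1)) : imagePos d θ k ∈ Ico 0 1 :=
  ⟨Int.fract_nonneg _, Int.fract_lt_one _⟩

lemma fd_coe_eq_imagePos (d : ℕ) (k : Fin (m + 1)) :
    fd d (θ k) = ((d * θ 0 + imagePos d θ k : ℝ) : S1) := by
  rw [fd_coe, AddCircle.coe_add, imagePos, AddCircle.coe_fract, ← AddCircle.coe_add]
  ring_nf

lemma injective_imagePos (hθ : StrictMono θ) (hspan : ∀ i j, θ j < θ i + 1) {d : ℕ}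
    (hinj : InjOn (fd d) (range fun j => (θ j : S1))) : Function.Injective (imagePos d θ) := by
  intro i j hij
  have hfd : fd d (θ i) = fd d (θ j) := by rw [fd_coe_eq_imagePos, fd_coe_eq_imagePos, hij]
  have hθij := hinj ⟨i, rfl⟩ ⟨j, rfl⟩ hfd
  rw [AddCircle.coe_eq_coe_iff_of_mem_Ico (apply_mem_Ico hθ.monotone hspan i)
    (apply_mem_Ico hθ.monotone hspan j)] at hθij
  exact hθ.injective hθij

lemma fract_mul_sub_eq_fract_imagePos_sub (d : ℕ) (k : Fin (m + 1)) :
    Int.fract (d * (nextLift θ k - θ k)) = Int.fract (imagePos d θ (k + 1) - imagePos d θ k) := by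
  obtain ⟨z, hz⟩ := exists_int_nextLift_eq (θ := θ) k
  rw [Int.fract_eq_fract]
  refine ⟨d * z + ⌊d * (θ (k + 1) - θ 0)⌋ - ⌊d * (θ k - θ 0)⌋, ?_⟩
  rw [hz, imagePos, imagePos, Int.fract, Int.fract]
  push_cast
  ring

theorem orientPresOn_iff_strictMono_imagePos (hθ : StrictMono θ) (hspan : ∀ i j, θ j < θ i + 1)
    {d : ℕ} (hinj : InjOn (fd d) (range fun j => (θ j : S1))) :
    OrientPresOn (fd d) (range fun j => (θ j : S1)) ↔ StrictMono (imagePos d θ) := by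
  set p := imagePos d θ
  have hp := injective_imagePos hθ hspan hinj
  have hpos {k : Fin (m + 1)} (hk : k ≠ 0) : p k ∈ Ioo 0 1 :=
    ⟨(imagePos_mem_Ico d θ k).1.lt_of_ne (imagePos_zero d θ ▸ hp.ne hk.symm),
      (imagePos_mem_Ico d θ k).2⟩
  constructor
  · rintro ⟨-, hOP⟩ i j hij
    rcases eq_or_ne i 0 with rfl | hi
    · simpa [p, imagePos_zero] using (hpos (Fin.pos_iff_ne_zero.1 hij)).1
    have h := hOP _ ⟨0, rfl⟩ _ ⟨i, rfl⟩ _ ⟨j, rfl⟩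
      ((sbtw_coe_apply_iff_of_strictMono hθ hspan).2 (Or.inl ⟨Fin.pos_iff_ne_zero.2 hi, hij⟩))
    simp only [fd_coe_eq_imagePos, imagePos_zero, add_zero] at h
    have hmem {k : Fin (m + 1)} (hk : k ≠ 0) : d * θ 0 + p k ∈ Ioo (d * θ 0) (d * θ 0 + 1) := by
      have := hpos hk; constructor <;> linarith [this.1, this.2]
    simpa using (sbtw_coe_iff_lt (hmem hi) (hmem (hij.trans' (Fin.pos_iff_ne_zero.2 hi)).ne')).1 h
  · intro hmono
    refine ⟨hinj, ?_⟩
    rintro _ ⟨i, rfl⟩ _ ⟨j, rfl⟩ _ ⟨k, rfl⟩ h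
    simp only [fd_coe_eq_imagePos]
    refine (sbtw_coe_apply_iff_of_strictMono (θ := fun k => d * θ 0 + p k) (fun a b hab => ?_) (fun a b => ?_)).2
      ((sbtw_coe_apply_iff_of_strictMono hθ hspan).1 h)
    · simpa using hmono hab
    · linarith [(imagePos_mem_Ico d θ a).1, (imagePos_mem_Ico d θ b).2]

end ImagePositions

lemma exists_strictMono_coe_enum {B : Set S1} (hB : B.Finite) {n : ℕ} (hn : B.ncard = n) :
    ∃ θ : Fin n → ℝ, StrictMono θ ∧ (∀ k, θ k ∈ Ico 0 1) ∧ B = range fun k => (θ k : S1) := by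
  set T := hB.toFinset.image fun x => (AddCircle.equivIco 1 0 x : ℝ)
  have hT : T.card = n := by
    rw [Finset.card_image_of_injective _ fun x y h => (AddCircle.equivIco 1 0).injective
      (Subtype.ext h), ← Set.ncard_eq_toFinset_card _ hB, hn]
  refine ⟨T.orderEmbOfFin hT, (T.orderEmbOfFin hT).strictMono, fun k => ?_, ?_⟩
  · obtain ⟨x, -, hx⟩ := Finset.mem_image.1 (T.orderEmbOfFin_mem hT k)
    simpa [← hx] using (AddCircle.equivIco 1 0 x).2
  · have hrange : (range fun k => ((T.orderEmbOfFin hT k : ℝ) : S1)) = (↑) '' (T : Set ℝ) := by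
      rw [← T.range_orderEmbOfFin hT, ← range_comp]; rfl
    rw [hrange, Finset.coe_image, image_image, hB.coe_toFinset]
    simp [AddCircle.coe_equivIco]

/-- orientation preserving iff sum of remainders of hole lengths is 1/d. -/
theorem stmt1 (d M : ℕ) (hd : 2 ≤ d) (B : Set S1) (hBfin : B.Finite)
    (hM : B.ncard = M) (hM2 : 2 ≤ M)
    (hinj : Set.InjOn (fd d) B)
    (H : Fin M → Set S1) (henum : IsHoleEnum B H) :
    OrientPresOn (fd d) B ↔ ∑ k, rem d (len (H k)) = 1 / d := by
  obtain ⟨m, rfl⟩ : ∃ m, M = m + 1 := ⟨M - 1, by omega⟩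
  obtain ⟨θ, hθ, hθ01, rfl⟩ := exists_strictMono_coe_enum hBfin hM
  have hspan : ∀ i j, θ j < θ i + 1 := fun i j => by linarith [(hθ01 i).1, (hθ01 j).2]
  obtain ⟨hH, hHhole, -, -⟩ := henum
  choose e he using fun k => exists_eq_holeArc_of_isHole hθ hspan (hHhole k)
  have he_bij : e.Bijective :=
    Finite.injective_iff_bijective.1 fun i j hij => hH (by rw [he i, he j, hij])
  have hd0 : d ≠ 0 := by omega
  have hsum : ∑ k, rem d (len (H k)) =
      (∑ k, Int.fract (imagePos d θ (k + 1) - imagePos d θ k)) / d := by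
    rw [Fintype.sum_bijective e he_bij _ (fun k => rem d (len (holeArc θ k))) fun k => by rw [he],
      Finset.sum_div]
    simp only [len_holeArc hθ hspan, rem_eq_fract_div hd0,
      fract_mul_sub_eq_fract_imagePos_sub]
  rw [hsum, div_left_inj' (Nat.cast_ne_zero.2 hd0), orientPresOn_iff_strictMono_imagePos hθ hspan hinj,
    sum_fract_sub_eq_one_iff (by omega) (injective_imagePos hθ hspan hinj) (imagePos_zero d θ)
      (imagePos_mem_Ico d θ)]
end
end

section
/- If T ⊂ S^1 forms a wandering N-gon under f(z) = z^d (d ≥ 2, N ≥ 3), then for each k with 1 ≤ k ≤ N − 2, the length s_k(T_i) of the k-th smallest hole of T_i = f^i(T) tends to 0 as i → ∞. -/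
open MeasureTheory Set Metric Filter Topology

noncomputable section

/-!
If a hole of `f^i(T)` other than the two largest has length at least `ε`, then so do the three
largest holes. Cutting the circle at a point of `f^i(T)`, these holes lift to three disjoint
intervals of length at least `ε` separated by points of `f^i(T)`, so `f^i(T)` contains three points
at cyclic distances at least `ε`; the triangle they span has area at least `8 ε ^ 3`. The convex
hulls `CH (f^i(T))` are pairwise disjoint subsets of the unit disc, so their areas tend to `0`, and
this can happen for only finitely many `i`.
-/

open ComplexConjugate Pointwise Real

lemma sin_two_mul_add_sin_two_mul_sub_sin (a b : ℝ) :
    sin (2 * a) + sin (2 * b) - sin (2 * a + 2 * b) = 4 * sin a * sin b * sin (a + b) := by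
  rw [show 2 * a + 2 * b = (a + b) + (a + b) by ring, two_mul, two_mul, sin_add (a + b),
    sin_add a b, cos_add a b, sin_add a a, sin_add b b]
  linear_combination (-2 * sin a * cos a) * sin_sq_add_cos_sq b +
    (-2 * sin b * cos b) * sin_sq_add_cos_sq a

open Complex in
lemma im_conj_mul_exp_sub_exp (A B C : ℝ) :
    (conj (exp (B * I) - exp (A * I)) * (exp (C * I) - exp (A * I))).im =
      Real.sin (B - A) + Real.sin (C - B) - Real.sin (C - A) := by
  simp only [exp_mul_I, ← ofReal_cos, ← ofReal_sin, map_sub, map_add, map_mul, conj_ofReal,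
    conj_I, mul_im, sub_re, sub_im, add_re, add_im, mul_re, ofReal_re, ofReal_im, I_re, I_im,
    neg_re, neg_im, Real.sin_sub]
  ring

lemma two_mul_le_sin_pi_mul {ε x : ℝ} (hε₀ : 0 ≤ ε) (hε : ε ≤ x) (hx : x ≤ 1 - ε) :
    2 * ε ≤ sin (π * x) := by
  have hπ := pi_pos
  rcases le_total x (1 / 2) with h | h
  · have := mul_le_sin (x := π * x) (by nlinarith) (by nlinarith)
    rw [← mul_assoc, div_mul_cancel₀ _ pi_ne_zero] at this
    linarith
  · have := mul_le_sin (x := π * (1 - x)) (by nlinarith) (by nlinarith)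
    rw [← mul_assoc, div_mul_cancel₀ _ pi_ne_zero, mul_one_sub π, sin_pi_sub] at this
    linarith

lemma volume_parallelepiped_pair (z w : ℂ) :
    volume (parallelepiped ![z, w]) = ENNReal.ofReal |(conj z * w).im| := by
  have := Complex.finrank_real_complex_fact
  rw [← Complex.orientation.measure_eq_volume, AlternatingMap.measure_parallelepiped,
    ← Orientation.areaForm_to_volumeForm, Complex.areaForm]

lemma vadd_parallelepiped_half_subset_convexHull (p q r : ℂ) :
    p +ᵥ parallelepiped ![(q - p) / 2, (r - p) / 2] ⊆ convexHull ℝ {p, q, r} := by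
  rintro _ ⟨x, hx, rfl⟩
  obtain ⟨t, ⟨ht0, ht1⟩, rfl⟩ := (mem_parallelepiped_iff _ _).1 hx
  have h₀ : 0 ≤ t 0 ∧ t 0 ≤ 1 := ⟨ht0 0, ht1 0⟩
  have h₁ : 0 ≤ t 1 ∧ t 1 ≤ 1 := ⟨ht0 1, ht1 1⟩
  have key := (convex_convexHull ℝ ({p, q, r} : Set ℂ)).sum_mem (t := Finset.univ)
    (w := ![1 - t 0 / 2 - t 1 / 2, t 0 / 2, t 1 / 2]) (z := ![p, q, r])
    (by intro i _; fin_cases i <;> simp <;> linarith)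
    (by simp [Fin.sum_univ_three]; ring)
    (by intro i _; fin_cases i <;> apply subset_convexHull <;> simp)
  convert key using 1
  simp [Fin.sum_univ_three, Fin.sum_univ_two, Complex.real_smul]
  ring

lemma ofReal_le_volume_convexHull_triple (p q r : ℂ) :
    ENNReal.ofReal (|(conj (q - p) * (r - p)).im| / 4) ≤ volume (convexHull ℝ {p, q, r}) := by
  calc ENNReal.ofReal (|(conj (q - p) * (r - p)).im| / 4)
      = volume (p +ᵥ parallelepiped ![(q - p) / 2, (r - p) / 2]) := by
        rw [measure_vadd, volume_parallelepiped_pair, map_div₀, Complex.conj_ofNat,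
          div_mul_div_comm, ← Complex.ofReal_ofNat, ← Complex.ofReal_mul, Complex.div_ofReal_im,
          abs_div]
        norm_num
    _ ≤ volume (convexHull ℝ {p, q, r}) :=
        measure_mono (vadd_parallelepiped_half_subset_convexHull p q r)

lemma emb_coe (u : ℝ) : emb (u : S1) = Complex.exp (↑(2 * π * u) * Complex.I) := by
  rw [emb, AddCircle.toCircle_apply_mk, Circle.coe_exp, div_one]

lemma ofReal_le_volume_CH_of_gaps {B : Set S1} {u₁ u₂ u₃ ε : ℝ} (hε : 0 ≤ ε)
    (h₁ : (u₁ : S1) ∈ B) (h₂ : (u₂ : S1) ∈ B) (h₃ : (u₃ : S1) ∈ B)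
    (h₁₂ : ε ≤ u₂ - u₁) (h₂₃ : ε ≤ u₃ - u₂) (h₃₁ : ε ≤ u₁ + 1 - u₃) :
    ENNReal.ofReal (8 * ε ^ 3) ≤ volume (CH B) := by
  have hcross : (conj (emb u₂ - emb u₁) * (emb u₃ - emb u₁)).im =
      4 * sin (π * (u₂ - u₁)) * sin (π * (u₃ - u₂)) * sin (π * (u₃ - u₁)) := by
    rw [emb_coe, emb_coe, emb_coe, im_conj_mul_exp_sub_exp,
      show π * (u₃ - u₁) = π * (u₂ - u₁) + π * (u₃ - u₂) by ring,
      ← sin_two_mul_add_sin_two_mul_sub_sin]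
    ring_nf
  have hs₁ := two_mul_le_sin_pi_mul hε h₁₂ (by linarith)
  have hs₂ := two_mul_le_sin_pi_mul hε h₂₃ (by linarith)
  have hs₃ := two_mul_le_sin_pi_mul hε (show ε ≤ u₃ - u₁ by linarith) (by linarith)
  have hsub : ({emb u₁, emb u₂, emb u₃} : Set ℂ) ⊆ emb '' B := by
    rintro _ (rfl | rfl | rfl) <;> exact mem_image_of_mem _ ‹_›
  calc ENNReal.ofReal (8 * ε ^ 3)
      ≤ ENNReal.ofReal (|(conj (emb u₂ - emb u₁) * (emb u₃ - emb u₁)).im| / 4) := by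
        gcongr
        rw [hcross, le_div_iff₀ (by norm_num)]
        refine le_trans ?_ (le_abs_self _)
        calc 8 * ε ^ 3 * 4 = 4 * (2 * ε) * (2 * ε) * (2 * ε) := by ring
          _ ≤ _ := by gcongr <;> nlinarith
    _ ≤ volume (CH B) :=
        (ofReal_le_volume_convexHull_triple _ _ _).trans (measure_mono (convexHull_mono hsub))

namespace IsHole

variable {B C C' : Set S1}

lemma subset_compl (hC : IsHole B C) : C ⊆ Bᶜ := by
  obtain ⟨x, -, rfl⟩ := hC
  exact connectedComponentIn_subset _ _

lemma isConnected (hC : IsHole B C) : IsConnected C := by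
  obtain ⟨x, hx, rfl⟩ := hC
  exact isConnected_connectedComponentIn_iff.2 hx

lemma eq_connectedComponentIn (hC : IsHole B C) {y : S1} (hy : y ∈ C) :
    C = connectedComponentIn Bᶜ y := by
  obtain ⟨x, -, rfl⟩ := hC
  exact connectedComponentIn_eq hy

lemma eq_of_mem (hC : IsHole B C) (hC' : IsHole B C') {y : S1} (hy : y ∈ C) (hy' : y ∈ C') :
    C = C' :=
  (hC.eq_connectedComponentIn hy).trans (hC'.eq_connectedComponentIn hy').symm

end IsHole

lemma volume_le_of_forall_equivIoc_mem_Icc {C : Set S1} {b₀ a b : ℝ}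
    (h : ∀ x ∈ C, (AddCircle.equivIoc 1 b₀ x : ℝ) ∈ Icc a b) :
    volume C ≤ ENNReal.ofReal (b - a) :=
  calc volume C ≤ volume (AddCircle.equivIoc 1 b₀ ⁻¹' (Subtype.val ⁻¹' Icc a b)) := measure_mono h
    _ = volume (Subtype.val '' (Subtype.val ⁻¹' Icc a b : Set (Ioc b₀ (b₀ + 1)))) := by
      rw [(AddCircle.measurePreserving_equivIoc 1).measure_preimage
        (measurableSet_Icc.preimage measurable_subtype_coe).nullMeasurableSet,
        comap_subtype_coe_apply measurableSet_Ioc]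
    _ ≤ volume (Icc a b) := measure_mono (image_preimage_subset _ _)
    _ = ENNReal.ofReal (b - a) := Real.volume_Icc

lemma IsHole.exists_lift {B C : Set S1} (hC : IsHole B C) {b₀ : ℝ} (hb₀ : (b₀ : S1) ∈ B) :
    ∃ a b : ℝ, b₀ ≤ a ∧ b ≤ b₀ + 1 ∧ len C ≤ b - a ∧ ∀ t ∈ Ioo a b, (t : S1) ∈ C := by
  set ψ : S1 → ℝ := fun x => AddCircle.equivIoc 1 b₀ x
  have hψ : ∀ x, ψ x ∈ Ioc b₀ (b₀ + 1) := fun x => (AddCircle.equivIoc 1 b₀ x).2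
  have hcont : ContinuousOn ψ C := fun x hx =>
    (continuous_subtype_val.continuousAt.comp (AddCircle.continuousAt_equivIoc 1 b₀
      (ne_of_mem_of_not_mem hx fun h => hC.subset_compl h hb₀))).continuousWithinAt
  have hI : IsConnected (ψ '' C) := hC.isConnected.image ψ hcont
  have hbdd : BddBelow (ψ '' C) := ⟨b₀, forall_mem_image.2 fun x _ => (hψ x).1.le⟩
  have hbdd' : BddAbove (ψ '' C) := ⟨b₀ + 1, forall_mem_image.2 fun x _ => (hψ x).2⟩
  refine ⟨sInf (ψ '' C), sSup (ψ '' C), le_csInf hI.nonempty (forall_mem_image.2 fun x _ =>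
    (hψ x).1.le), csSup_le hI.nonempty (forall_mem_image.2 fun x _ => (hψ x).2), ?_, ?_⟩
  · refine ENNReal.toReal_le_of_le_ofReal (sub_nonneg.2 (csInf_le_csSup hI.nonempty hbdd hbdd'))
      (volume_le_of_forall_equivIoc_mem_Icc (b₀ := b₀) fun x hx => ?_)
    exact ⟨csInf_le hbdd (mem_image_of_mem ψ hx), le_csSup hbdd' (mem_image_of_mem ψ hx)⟩
  · intro t ht
    obtain ⟨x, hx, rfl⟩ := hI.Ioo_csInf_csSup_subset hbdd hbdd' ht
    simpa [ψ] using hx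

section Lift

variable {B C C' : Set S1} {a b a' b' : ℝ}

lemma le_or_le_of_isHole_ne (hC : IsHole B C) (hC' : IsHole B C') (hne : C ≠ C')
    (hab : a < b) (hab' : a' < b') (hI : ∀ t ∈ Ioo a b, (t : S1) ∈ C)
    (hI' : ∀ t ∈ Ioo a' b', (t : S1) ∈ C') : b ≤ a' ∨ b' ≤ a := by
  by_contra! h
  obtain ⟨t, ht, ht'⟩ := exists_between (max_lt_iff.2 ⟨lt_min hab h.2, lt_min h.1 hab'⟩)
  rw [max_lt_iff] at ht
  rw [lt_min_iff] at ht'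
  exact hne (hC.eq_of_mem hC' (hI t ⟨ht.1, ht'.1⟩) (hI' t ⟨ht.2, ht'.2⟩))

lemma exists_mem_Icc_of_isHole_ne (hC : IsHole B C) (hC' : IsHole B C') (hne : C ≠ C')
    (hab : a < b) (hab' : a' < b') (hI : ∀ t ∈ Ioo a b, (t : S1) ∈ C)
    (hI' : ∀ t ∈ Ioo a' b', (t : S1) ∈ C') (hba' : b ≤ a') : ∃ w ∈ Icc b a', (w : S1) ∈ B := by
  by_contra! h
  have hsub : ((↑) : ℝ → S1) '' Ioo a b' ⊆ Bᶜ := by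
    rintro _ ⟨t, ht, rfl⟩
    rcases lt_or_ge t b with htb | htb
    · exact hC.subset_compl (hI t ⟨ht.1, htb⟩)
    rcases le_or_gt t a' with hta | hta
    · exact h t ⟨htb, hta⟩
    · exact hC'.subset_compl (hI' t ⟨hta, ht.2⟩)
  obtain ⟨m, hm⟩ := nonempty_Ioo.2 hab
  obtain ⟨m', hm'⟩ := nonempty_Ioo.2 hab'
  have hconn : ((↑) : ℝ → S1) '' Ioo a b' ⊆ C := by
    rw [hC.eq_connectedComponentIn (hI m hm)]
    exact (isPreconnected_Ioo.image _ (AddCircle.continuous_mk' 1).continuousOn)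
      |>.subset_connectedComponentIn ⟨m, ⟨hm.1, by linarith [hm.2]⟩, rfl⟩ hsub
  exact hne (hC.eq_of_mem hC' (hconn ⟨m', ⟨by linarith [hm'.1], hm'.2⟩, rfl⟩) (hI' m' hm'))

end Lift

lemma exists_gaps_of_three_holes {B : Set S1} (hB : B.Nonempty) {C : Fin 3 → Set S1}
    (hC : ∀ m, IsHole B (C m)) (hinj : Function.Injective C) {ε : ℝ} (hε : 0 < ε)
    (hlen : ∀ m, ε ≤ len (C m)) :
    ∃ u₁ u₂ u₃ : ℝ, (u₁ : S1) ∈ B ∧ (u₂ : S1) ∈ B ∧ (u₃ : S1) ∈ B ∧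
      ε ≤ u₂ - u₁ ∧ ε ≤ u₃ - u₂ ∧ ε ≤ u₁ + 1 - u₃ := by
  obtain ⟨x, hx⟩ := hB
  obtain ⟨b₀, rfl⟩ := QuotientAddGroup.mk_surjective x
  choose a b hb₀a hbb₀ hlenab hI using fun m => (hC m).exists_lift hx
  have hab : ∀ m, a m < b m := fun m => by linarith [hlen m, hlenab m]
  have hne : ∀ {m m'}, b m ≤ a m' → C m ≠ C m' := fun {m _} h he => by
    obtain rfl := hinj he
    linarith [hab m]
  have sorted : ∀ m₁ m₂ m₃, b m₁ ≤ a m₂ → b m₂ ≤ a m₃ → ∃ u₁ u₂ u₃ : ℝ, (u₁ : S1) ∈ B ∧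
      (u₂ : S1) ∈ B ∧ (u₃ : S1) ∈ B ∧ ε ≤ u₂ - u₁ ∧ ε ≤ u₃ - u₂ ∧ ε ≤ u₁ + 1 - u₃ := by
    intro m₁ m₂ m₃ h₁₂ h₂₃
    obtain ⟨w₁, hw₁, hw₁B⟩ := exists_mem_Icc_of_isHole_ne (hC m₁) (hC m₂) (hne h₁₂) (hab _)
      (hab _) (hI m₁) (hI m₂) h₁₂
    obtain ⟨w₂, hw₂, hw₂B⟩ := exists_mem_Icc_of_isHole_ne (hC m₂) (hC m₃) (hne h₂₃) (hab _)
      (hab _) (hI m₂) (hI m₃) h₂₃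
    refine ⟨b₀, w₁, w₂, hx, hw₁B, hw₂B, ?_, ?_, ?_⟩
    · linarith [hlen m₁, hlenab m₁, hb₀a m₁, hw₁.1]
    · linarith [hlen m₂, hlenab m₂, hw₁.2, hw₂.1]
    · linarith [hlen m₃, hlenab m₃, hbb₀ m₃, hw₂.2]
  have hord : ∀ m m', m ≠ m' → b m ≤ a m' ∨ b m' ≤ a m := fun m m' h =>
    le_or_le_of_isHole_ne (hC m) (hC m') (hinj.ne h) (hab m) (hab m') (hI m) (hI m')
  -- in each of the eight cases, two of the three comparisons chain together
  rcases hord 0 1 (by decide) with h01 | h10 <;> rcases hord 1 2 (by decide) with h12 | h21 <;>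
    rcases hord 0 2 (by decide) with h02 | h20
  all_goals first
    | exact sorted 0 1 2 ‹_› ‹_› | exact sorted 0 2 1 ‹_› ‹_› | exact sorted 1 0 2 ‹_› ‹_›
    | exact sorted 1 2 0 ‹_› ‹_› | exact sorted 2 0 1 ‹_› ‹_› | exact sorted 2 1 0 ‹_› ‹_›

lemma IsHoleEnum.ofReal_le_volume_CH {B : Set S1} {N : ℕ} {H : Fin N → Set S1}
    (hH : IsHoleEnum B H) (hB : B.Nonempty) {k : Fin N} (hk : (k : ℕ) < N - 2) {ε : ℝ}
    (hε : 0 < ε) (hlen : ε ≤ len (H k)) : ENNReal.ofReal (8 * ε ^ 3) ≤ volume (CH B) := by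
  obtain ⟨hinj, hhole, -, hmono⟩ := hH
  let top : Fin 3 → Fin N := fun m => ⟨N - 3 + m, by omega⟩
  have htop : Function.Injective top := fun m m' h => Fin.ext (by simpa [top] using h)
  obtain ⟨u₁, u₂, u₃, h₁, h₂, h₃, g₁₂, g₂₃, g₃₁⟩ := exists_gaps_of_three_holes hB
    (fun m => hhole (top m)) (hinj.comp htop) hε
    (fun m => hlen.trans (hmono _ _ (Fin.le_def.2 (by simp only [top]; omega))))
  exact ofReal_le_volume_CH_of_gaps hε.le h₁ h₂ h₃ g₁₂ g₂₃ g₃₁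

open Function in
lemma tendsto_measure_atTop_zero_of_pairwise_disjoint {α : Type*} [MeasurableSpace α]
    {μ : Measure α} {s : ℕ → Set α} (hs : ∀ i, NullMeasurableSet (s i) μ)
    (hd : Pairwise (Disjoint on s)) (hfin : μ (⋃ i, s i) ≠ ⊤) :
    Tendsto (fun i => μ (s i)) atTop (𝓝 0) :=
  ENNReal.tendsto_atTop_zero_of_tsum_ne_top <| by
    rwa [← measure_iUnion₀ (hd.mono fun _ _ h => h.aedisjoint) hs]

lemma CH_subset_closedBall (B : Set S1) : CH B ⊆ closedBall 0 1 :=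
  convexHull_min (image_subset_iff.2 fun x _ => by
    rw [mem_preimage, mem_closedBall_zero_iff, emb, Circle.norm_coe]) (convex_closedBall 0 1)

lemma Wandering.tendsto_volume_CH {d N : ℕ} {T : Set S1} (hw : Wandering d N T) :
    Tendsto (fun i => volume (CH ((fd d)^[i] '' T))) atTop (𝓝 0) :=
  tendsto_measure_atTop_zero_of_pairwise_disjoint
    (fun _ => (convex_convexHull ℝ _).nullMeasurableSet (μ := volume))
    (fun i j hij => (hw i j).2 hij)
    (ne_top_of_le_ne_top measure_closedBall_lt_top.ne
      (measure_mono (iUnion_subset fun _ => CH_subset_closedBall _)))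

theorem stmt5_general (d N : ℕ) (T : Set S1)
    (hw : Wandering d N T)
    (H : ℕ → Fin N → Set S1)
    (hH : ∀ i, IsHoleEnum ((fd d)^[i] '' T) (H i)) :
    ∀ k : Fin N, (k : ℕ) < N - 2 →
      Tendsto (fun i => len (H i k)) atTop (nhds 0) := by
  intro k hk
  refine tendsto_order.2 ⟨fun a ha => Eventually.of_forall fun i =>
    ha.trans_le ENNReal.toReal_nonneg, fun ε hε => ?_⟩
  filter_upwards [(tendsto_order.1 hw.tendsto_volume_CH).2 _
    (ENNReal.ofReal_pos.2 (by positivity : (0 : ℝ) < 8 * ε ^ 3))] with i hi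
  by_contra! hlen
  have hB : ((fd d)^[i] '' T).Nonempty := nonempty_of_ncard_ne_zero (by rw [(hw i 0).1]; omega)
  exact ((hH i).ofReal_le_volume_CH hB hk hε hlen).not_gt hi

/-- the N-2 smallest holes of a wandering N-gon have lengths tending to 0. -/
theorem stmt5 (d N : ℕ) (hd : 2 ≤ d) (hN : 3 ≤ N) (T : Set S1)
    (hw : Wandering d N T)
    (H : ℕ → Fin N → Set S1)
    (hH : ∀ i, IsHoleEnum ((fd d)^[i] '' T) (H i)) :
    ∀ k : Fin N, (k : ℕ) < N - 2 →
      Tendsto (fun i => len (H i k)) atTop (nhds 0) :=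
  stmt5_general d N T hw H hH
end
end
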